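/- arXiv:2112.14195 — 2 statements merged into one kernel-verified Lean document; each statement's English description precedes it below -/
import Mathlib

section
/- For any sequence of positive semidefinite increments Aₖ ∈ ℝᵈˣᵈ with partial sums Sₖ = ∑_{j<k} Aⱼ, and any λ > 0, we have ∑_{k=1}^K min{ ‖(Sₖ + λI)^{-1/2} Aₖ (Sₖ + λI)^{-1/2}‖_op , 1 } ≤ 2 log det(λ^{-1} S_{K+1} + I). -/
open scoped Matrix.Norms.L2Operator
open Classical

/-- The inverse of the positive semidefinite square root of a matrix (junk value `0`
if the matrix is not positive semidefinite). -/
noncomputable def invSqrt {d : ℕ} (M : Matrix (Fin d) (Fin d) ℝ) : Matrix (Fin d) (Fin d) ℝ :=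
  if h : M.PosSemidef then
    (h.1.eigenvectorUnitary.1 * Matrix.diagonal ((↑) ∘ (Real.sqrt ·) ∘ h.1.eigenvalues) *
      (star h.1.eigenvectorUnitary : Matrix (Fin d) (Fin d) ℝ))⁻¹ else 0


lemma min_le_two_log {x : ℝ} (hx : 0 ≤ x) : min x 1 ≤ 2 * Real.log (1 + x) := by
  rcases le_or_gt x 1 with h | h
  · rw [min_eq_left h]
    have h2 : (0:ℝ) < 1 - x/2 := by linarith
    have he : Real.exp (x/2) ≤ 1 + x := by
      have h1 : 1 - x/2 ≤ Real.exp (-(x/2)) := by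
        have := Real.add_one_le_exp (-(x/2)); linarith
      have : Real.exp (x/2) = (Real.exp (-(x/2)))⁻¹ := by
        rw [← Real.exp_neg, neg_neg]
      rw [this]
      have hpos : 0 < Real.exp (-(x/2)) := Real.exp_pos _
      rw [inv_le_iff_one_le_mul₀ hpos]
      nlinarith [Real.add_one_le_exp (-(x/2))]
    have := Real.le_log_iff_exp_le (by linarith : (0:ℝ) < 1 + x) |>.mpr he
    linarith
  · rw [min_eq_right h.le]
    have h2 : Real.exp (1/2) ≤ 1 + x := by
      have : Real.exp (1/2) < 2 := by
        rw [show (1/2 : ℝ) = 2⁻¹ by norm_num]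
        have h4 : Real.exp 2⁻¹ ^ 2 = Real.exp 1 := by
          rw [← Real.exp_nat_mul]; norm_num
        nlinarith [Real.exp_pos (2⁻¹:ℝ), Real.exp_one_lt_d9]
      linarith
    have := Real.le_log_iff_exp_le (by linarith : (0:ℝ) < 1 + x) |>.mpr h2
    linarith


lemma norm_le_of_eig {d : ℕ} {M : Matrix (Fin d) (Fin d) ℝ} (hM : M.IsHermitian)
    {C : ℝ} (hC0 : 0 ≤ C) (h : ∀ i, |hM.eigenvalues i| ≤ C) : ‖M‖ ≤ C := by
  rw [Matrix.l2_opNorm_def]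
  refine ContinuousLinearMap.opNorm_le_bound _ hC0 fun x => ?_
  set b := hM.eigenvectorBasis with hb
  set T : EuclideanSpace ℝ (Fin d) →L[ℝ] EuclideanSpace ℝ (Fin d) :=
    (Matrix.toEuclideanLin.trans LinearMap.toContinuousLinearMap) M with hT
  have hTapp : ∀ y : EuclideanSpace ℝ (Fin d), T y = Matrix.toEuclideanLin M y := fun _ => rfl
  have hsym : (Matrix.toEuclideanLin M).IsSymmetric :=
    Matrix.isHermitian_iff_isSymmetric.mp hM
  have hTb : ∀ i, Matrix.toEuclideanLin M (b i) = hM.eigenvalues i • b i := by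
    intro i
    have := hM.mulVec_eigenvectorBasis i
    ext j
    have hj := congrFun this j
    simpa [Matrix.toEuclideanLin_apply] using hj
  have hrep : ∀ i, b.repr (T x) i = hM.eigenvalues i * b.repr x i := by
    intro i
    rw [OrthonormalBasis.repr_apply_apply, OrthonormalBasis.repr_apply_apply, hTapp,
      ← hsym (b i) x, hTb i, real_inner_smul_left]
  -- norms via repr
  have hnx : ‖x‖ = ‖b.repr x‖ := (b.repr.norm_map x).symm
  have hnT : ‖T x‖ = ‖b.repr (T x)‖ := (b.repr.norm_map (T x)).symm
  rw [hnx, hnT]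
  have h1 : ‖b.repr (T x)‖ ^ 2 ≤ (C * ‖b.repr x‖) ^ 2 := by
    rw [EuclideanSpace.norm_eq, EuclideanSpace.norm_eq]
    rw [Real.sq_sqrt (by positivity), mul_pow, Real.sq_sqrt (by positivity)]
    calc ∑ i, ‖b.repr (T x) i‖ ^ 2 = ∑ i, (hM.eigenvalues i)^2 * ‖b.repr x i‖ ^ 2 := by
          refine Finset.sum_congr rfl fun i _ => ?_
          rw [hrep i]
          simp [Real.norm_eq_abs, mul_pow, sq_abs]
      _ ≤ ∑ i, C^2 * ‖b.repr x i‖ ^ 2 := by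
          refine Finset.sum_le_sum fun i _ => ?_
          have := h i
          have h2 : (hM.eigenvalues i)^2 ≤ C^2 := by nlinarith [abs_nonneg (hM.eigenvalues i), sq_abs (hM.eigenvalues i)]
          exact mul_le_mul_of_nonneg_right h2 (by positivity)
      _ = C^2 * ∑ i, ‖b.repr x i‖ ^ 2 := by rw [Finset.mul_sum]
  nlinarith [norm_nonneg (b.repr (T x)), norm_nonneg (b.repr x), mul_nonneg hC0 (norm_nonneg (b.repr x))]


lemma det_one_add {d : ℕ} {M : Matrix (Fin d) (Fin d) ℝ} (hM : M.IsHermitian) :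
    (1 + M).det = ∏ i, (1 + hM.eigenvalues i) := by
  set U : Matrix (Fin d) (Fin d) ℝ := (hM.eigenvectorUnitary : Matrix (Fin d) (Fin d) ℝ) with hU
  have hUmem := hM.eigenvectorUnitary.2
  have hUU : U * star U = 1 := (Matrix.mem_unitaryGroup_iff).mp hUmem
  have h1 : (1 : Matrix (Fin d) (Fin d) ℝ) + M
      = U * (1 + Matrix.diagonal (RCLike.ofReal ∘ hM.eigenvalues)) * star U := by
    rw [mul_add, add_mul, mul_one, hUU]
    congr 1
    have := hM.spectral_theorem
    rw [Unitary.conjStarAlgAut_apply] at this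
    exact this
  set D : Matrix (Fin d) (Fin d) ℝ := 1 + Matrix.diagonal (RCLike.ofReal ∘ hM.eigenvalues) with hD
  rw [h1, Matrix.det_mul, Matrix.det_mul]
  have h2 : U.det * (star U).det = 1 := by
    rw [← Matrix.det_mul, hUU, Matrix.det_one]
  calc U.det * D.det * (star U).det = D.det * (U.det * (star U).det) := by ring
    _ = D.det := by rw [h2, mul_one]
    _ = ∏ i, (1 + hM.eigenvalues i) := by
        rw [hD, ← Matrix.diagonal_one, Matrix.diagonal_add, Matrix.det_diagonal]
        simp

lemma key_det {d : ℕ} {M : Matrix (Fin d) (Fin d) ℝ} (hM : M.PosSemidef) :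
    1 + ‖M‖ ≤ (1 + M).det := by
  rcases Nat.eq_zero_or_pos d with rfl | hd
  · have hM0 : M = 0 := Subsingleton.elim _ _
    rw [hM0, norm_zero, Matrix.det_isEmpty]
    norm_num
  · obtain ⟨i₀, -, hmax⟩ := Finset.exists_max_image Finset.univ hM.1.eigenvalues
      ⟨⟨0, hd⟩, Finset.mem_univ _⟩
    have hC0 : 0 ≤ hM.1.eigenvalues i₀ := hM.eigenvalues_nonneg i₀
    have hnorm : ‖M‖ ≤ hM.1.eigenvalues i₀ := by
      refine norm_le_of_eig hM.1 hC0 fun i => ?_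
      rw [abs_of_nonneg (hM.eigenvalues_nonneg i)]
      exact hmax i (Finset.mem_univ i)
    rw [det_one_add hM.1]
    have h1 : 1 + hM.1.eigenvalues i₀ ≤ ∏ i, (1 + hM.1.eigenvalues i) := by
      rw [← Finset.mul_prod_erase Finset.univ _ (Finset.mem_univ i₀)]
      have hrest : (1:ℝ) ≤ ∏ i ∈ Finset.univ.erase i₀, (1 + hM.1.eigenvalues i) := by
        calc (1:ℝ) = ∏ _i ∈ Finset.univ.erase i₀, (1:ℝ) := by rw [Finset.prod_const_one]
          _ ≤ _ := Finset.prod_le_prod (fun i _ => by norm_num)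
              (fun i _ => by linarith [hM.eigenvalues_nonneg i])
      nlinarith
    linarith

lemma step_bound {d : ℕ} {A B : Matrix (Fin d) (Fin d) ℝ}
    (hA : A.PosSemidef) (hB : B.PosDef) :
    min ‖invSqrt B * A * invSqrt B‖ 1 ≤
      2 * (Real.log (B + A).det - Real.log B.det) := by
  have hBpsd := hB.posSemidef
  set Q := (hBpsd.1.eigenvectorUnitary.1 * Matrix.diagonal ((↑) ∘ (Real.sqrt ·) ∘ hBpsd.1.eigenvalues) *
      (star hBpsd.1.eigenvectorUnitary : Matrix (Fin d) (Fin d) ℝ)) with hQdef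
  have hQpsd : Q.IsHermitian := by
    rw [Matrix.IsHermitian, hQdef]
    simp [Matrix.conjTranspose_mul, Matrix.diagonal_conjTranspose, Matrix.star_eq_conjTranspose,
      mul_assoc]
  have hdetB : 0 < B.det := hB.det_pos
  have hQQ : Q * Q = B := by
    have hsU : (star (hBpsd.1.eigenvectorUnitary : Matrix (Fin d) (Fin d) ℝ)) *
        (hBpsd.1.eigenvectorUnitary : Matrix (Fin d) (Fin d) ℝ) = 1 :=
      Unitary.coe_star_mul_self _
    have hDD : (Matrix.diagonal ((↑) ∘ (Real.sqrt ·) ∘ hBpsd.1.eigenvalues) :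
        Matrix (Fin d) (Fin d) ℝ) *
        (Matrix.diagonal ((↑) ∘ (Real.sqrt ·) ∘ hBpsd.1.eigenvalues) : Matrix (Fin d) (Fin d) ℝ) =
        Matrix.diagonal (RCLike.ofReal ∘ hBpsd.1.eigenvalues) := by
      rw [Matrix.diagonal_mul_diagonal]
      congr 1
      funext i
      simp [Real.mul_self_sqrt (hBpsd.eigenvalues_nonneg i)]
    conv_rhs => rw [hBpsd.1.spectral_theorem, Unitary.conjStarAlgAut_apply]
    rw [hQdef, ← hDD]
    simp only [mul_assoc]
    rw [← mul_assoc _ _ (Matrix.diagonal _ * _), hsU, one_mul]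
  have hdetQ : Q.det * Q.det = B.det := by rw [← Matrix.det_mul, hQQ]
  have hQdet_ne : Q.det ≠ 0 := by
    intro h; rw [h, mul_zero] at hdetQ; exact absurd hdetQ.symm hdetB.ne'
  have hQunit : IsUnit Q.det := Ne.isUnit hQdet_ne
  set R := Q⁻¹ with hRdef
  have hinv : invSqrt B = R := by rw [invSqrt, dif_pos hBpsd]
  have hRherm : R.IsHermitian := by
    rw [Matrix.IsHermitian, hRdef, Matrix.conjTranspose_nonsing_inv, hQpsd]
  set M := R * A * R with hMdef
  have hMpsd : M.PosSemidef := by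
    have := hA.conjTranspose_mul_mul_same R
    rwa [hRherm.eq] at this
  have hRQ : R * Q = 1 := Matrix.nonsing_inv_mul Q hQunit
  have hQR : Q * R = 1 := Matrix.mul_nonsing_inv Q hQunit
  have hRBR : R * B * R = 1 := by
    rw [← hQQ, ← mul_assoc R Q Q, mul_assoc (R*Q) Q R, hRQ, hQR, one_mul]
  have h1M : (1 : Matrix (Fin d) (Fin d) ℝ) + M = R * (B + A) * R := by
    rw [mul_add, add_mul, hRBR, hMdef]
  have hRdet : R.det = Q.det⁻¹ := by
    rw [hRdef, Matrix.det_nonsing_inv, Ring.inverse_eq_inv']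
  have hBApd : (B + A).PosDef := hB.add_posSemidef hA
  have hdet1M : (1 + M).det = (B + A).det / B.det := by
    rw [h1M, Matrix.det_mul, Matrix.det_mul, hRdet, ← hdetQ]
    field_simp
  have hnorm := key_det hMpsd
  have hnn : (0:ℝ) ≤ ‖M‖ := norm_nonneg _
  have hlog : Real.log (1 + ‖M‖) ≤ Real.log ((1 + M).det) :=
    Real.log_le_log (by linarith) hnorm
  have hlog2 : Real.log ((1 + M).det) = Real.log (B + A).det - Real.log B.det := by
    rw [hdet1M, Real.log_div hBApd.det_pos.ne' hdetB.ne']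
  rw [hinv]
  calc min ‖M‖ 1 ≤ 2 * Real.log (1 + ‖M‖) := min_le_two_log hnn
    _ ≤ 2 * Real.log ((1 + M).det) := by linarith
    _ = 2 * (Real.log (B + A).det - Real.log B.det) := by rw [hlog2]

/-- Telescoping log-det bound: for PSD increments A₁,…,A_K with partial sums
Sₖ = ∑_{j<k} Aⱼ and λ > 0,
∑_{k=1}^K min{‖(Sₖ+λI)^{-1/2} Aₖ (Sₖ+λI)^{-1/2}‖_op, 1} ≤ 2 log det(λ⁻¹ S_{K+1} + I). -/
theorem stmt_5 {d K : ℕ} (lam : ℝ) (hlam : 0 < lam)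
    (A : ℕ → Matrix (Fin d) (Fin d) ℝ) (hA : ∀ k, (A k).PosSemidef)
    (S : ℕ → Matrix (Fin d) (Fin d) ℝ)
    (hS : ∀ k, S k = ∑ j ∈ Finset.Ico 1 k, A j) :
    ∑ k ∈ Finset.Icc 1 K,
        min ‖invSqrt (S k + lam • 1) * A k * invSqrt (S k + lam • 1)‖ 1 ≤
      2 * Real.log (lam⁻¹ • S (K + 1) + 1).det := by
  -- basic positivity facts
  have hlam1 : ((lam : ℝ) • (1 : Matrix (Fin d) (Fin d) ℝ)).PosDef := by
    rw [Matrix.smul_one_eq_diagonal]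
    exact Matrix.posDef_diagonal_iff.mpr fun _ => hlam
  have hSpsd : ∀ k, (S k).PosSemidef := by
    intro k
    rw [hS k]
    induction (Finset.Ico 1 k) using Finset.induction with
    | empty => simpa using Matrix.PosSemidef.zero
    | insert _ _ hnotmem ih =>
        rw [Finset.sum_insert hnotmem]
        exact (hA _).add ih
  have hBpd : ∀ k, (S k + lam • 1).PosDef := fun k => Matrix.PosDef.posSemidef_add (hSpsd k) hlam1
  set f : ℕ → ℝ := fun k => Real.log (S k + lam • 1).det with hf
  -- telescoping bound
  have hstep : ∀ k ∈ Finset.Icc 1 K,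
      min ‖invSqrt (S k + lam • 1) * A k * invSqrt (S k + lam • 1)‖ 1 ≤
        2 * (f (k+1) - f k) := by
    intro k hk
    obtain ⟨hk1, -⟩ := Finset.mem_Icc.mp hk
    have hSucc : S (k+1) + lam • 1 = (S k + lam • 1) + A k := by
      rw [hS (k+1), hS k, Finset.sum_Ico_succ_top hk1]
      abel
    have := step_bound (hA k) (hBpd k)
    rw [hf]
    simpa [← hSucc] using this
  have htele : ∑ k ∈ Finset.Icc 1 K, (2 * (f (k+1) - f k)) = 2 * (f (K+1) - f 1) := by
    rw [← Finset.mul_sum]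
    congr 1
    have : Finset.Icc 1 K = Finset.Ico 1 (K+1) := by
      rw [Finset.Ico_add_one_right_eq_Icc]
    rw [this, Finset.sum_Ico_eq_sum_range]
    simp only [Nat.add_sub_cancel]
    have := Finset.sum_range_sub (f := fun i => f (i + 1)) K
    simpa [add_comm, add_left_comm, add_assoc] using this
  have hmain : ∑ k ∈ Finset.Icc 1 K,
      min ‖invSqrt (S k + lam • 1) * A k * invSqrt (S k + lam • 1)‖ 1 ≤
        2 * (f (K+1) - f 1) := by
    rw [← htele]
    exact Finset.sum_le_sum hstep
  -- compute RHS
  have hS1 : S 1 = 0 := by rw [hS 1]; simp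
  have hf1 : f 1 = d * Real.log lam := by
    rw [hf]
    simp only [hS1, zero_add]
    rw [Matrix.smul_one_eq_diagonal, Matrix.det_diagonal]
    simp [Real.log_pow]
  have hXpos : 0 < (S (K+1) + lam • 1).det := (hBpd (K+1)).det_pos
  have hrhs : Real.log (lam⁻¹ • S (K + 1) + 1).det = f (K+1) - d * Real.log lam := by
    have h1 : lam⁻¹ • S (K + 1) + 1 = lam⁻¹ • (S (K+1) + lam • 1) := by
      rw [smul_add, smul_smul, inv_mul_cancel₀ hlam.ne', one_smul]
    rw [h1, Matrix.det_smul, Real.log_mul (by positivity) hXpos.ne', Real.log_pow,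
      Real.log_inv, Fintype.card_fin]
    have hfK : f (K+1) = Real.log (S (K+1) + lam • 1).det := rfl
    rw [hfK]
    ring
  rw [hrhs]
  linarith [hmain, hf1.le, hf1.ge]
end

section
/- KL divergence quadratic bound: under the exponential family transition model P_W(s'|s,a) = q(s') exp(⟨ψ(s'), Wφ(s,a)⟩ - Z_{sa}(W)), if the conditional covariance of ψ(s') satisfies Cov_{sa}^W[ψ(s')] ⪯ κI for all parameters W and all (s,a), then for any W, W': D_KL(P_W(·|s,a) ‖ P_{W'}(·|s,a)) ≤ (κ/2) ‖vec(W) - vec(W')‖²_{Φ_{sa} Φ_{sa}ᵀ}, where Φ_{sa} is the matrix whose rows are (E_{ij} φ(s,a))ᵀ over all basis matrices E_{ij}. -/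
open MeasureTheory Matrix

/-- Vectorization of a matrix: `vec M (i,j) = M i j`. -/
def vec {a b : ℕ} (M : Matrix (Fin a) (Fin b) ℝ) : Fin a × Fin b → ℝ :=
  fun p => M p.1 p.2

/-!
Along the segment `t ↦ W + t • (W' - W)` the model is a one-parameter exponential family in the
statistic `X = ⟨ψ, (W' - W) φ⟩`: under `P_W`, the cumulant generating function of `X` is
`Λ t = Z (W + t • (W' - W)) - Z W`, and `D_KL(P_W ‖ P_W') = Λ 1 - Λ' 0`. Since `Λ'' t` is the
variance of `X` under `P_{W + t • (W' - W)}`, it is at most `κ ‖(W' - W) φ‖²`, and a second order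
Taylor bound for `Λ` gives the claim; `‖(W - W') φ‖²` is the quadratic form of `Φ Φᵀ` at
`vec (W - W')`.
-/

open Real ProbabilityTheory

lemma image_le_tangent_add_sq_of_hasDerivAt {f f' f'' : ℝ → ℝ} {K x : ℝ}
    (hf : ∀ t, HasDerivAt f (f' t) t) (hf' : ∀ t, HasDerivAt f' (f'' t) t)
    (hK : ∀ t, f'' t ≤ K) (hx : 0 < x) :
    f x ≤ f 0 + f' 0 * x + K * x ^ 2 / 2 := by
  have hg (t : ℝ) : HasDerivAt (fun t => K * t ^ 2 / 2 - f t) (K * t - f' t) t := by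
    refine ((((hasDerivAt_pow 2 t).const_mul K).div_const 2).fun_sub (hf t)).congr_deriv ?_
    norm_num
    ring
  have hg' (t : ℝ) : HasDerivAt (fun t => K * t - f' t) (K - f'' t) t := by
    simpa using ((hasDerivAt_id' t).const_mul K).fun_sub (hf' t)
  have hconv : ConvexOn ℝ Set.univ (fun t => K * t ^ 2 / 2 - f t) :=
    convexOn_of_hasDerivWithinAt2_nonneg convex_univ
      (fun t _ => (hg t).continuousAt.continuousWithinAt)
      (fun t _ => (hg t).hasDerivWithinAt) (fun t _ => (hg' t).hasDerivWithinAt)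
      (fun t _ => sub_nonneg.2 (hK t))
  have hslope := hconv.le_slope_of_hasDerivAt (Set.mem_univ 0) (Set.mem_univ x) hx (hg 0)
  rw [slope_def_field, le_div_iff₀ (by simpa using hx)] at hslope
  norm_num at hslope
  linarith

namespace ProbabilityTheory

lemma mem_interior_integrableExpSet_of_forall {Ω : Type*} [MeasurableSpace Ω] {μ : Measure Ω}
    {X : Ω → ℝ} (hX : ∀ t, Integrable (fun ω => exp (t * X ω)) μ) (t : ℝ) :
    t ∈ interior (integrableExpSet X μ) := by
  rw [show integrableExpSet X μ = Set.univ from Set.eq_univ_of_forall hX, interior_univ]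
  trivial

lemma cgf_le_mul_integral_add_of_iteratedDeriv_two_le {Ω : Type*} [MeasurableSpace Ω]
    {μ : Measure Ω} [IsProbabilityMeasure μ] {X : Ω → ℝ} {K x : ℝ}
    (hX : ∀ t, Integrable (fun ω => exp (t * X ω)) μ)
    (hK : ∀ t, iteratedDeriv 2 (cgf X μ) t ≤ K) (hx : 0 < x) :
    cgf X μ x ≤ x * μ[X] + K * x ^ 2 / 2 := by
  have hmem := mem_interior_integrableExpSet_of_forall hX
  have hcgf' (t : ℝ) : HasDerivAt (deriv (cgf X μ)) (iteratedDeriv 2 (cgf X μ) t) t := by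
    rw [iteratedDeriv_succ, iteratedDeriv_one]
    exact (analyticAt_cgf (hmem t)).deriv.differentiableAt.hasDerivAt
  have := image_le_tangent_add_sq_of_hasDerivAt
    (fun t => (analyticAt_cgf (hmem t)).differentiableAt.hasDerivAt) hcgf' hK hx
  rwa [cgf_zero, deriv_cgf_zero (hmem 0), probReal_univ, div_one, zero_add, mul_comm] at this

end ProbabilityTheory

section WithDensityOfReal

variable {α : Type*} [MeasurableSpace α] {μ : Measure α} {f : α → ℝ}

lemma integral_withDensity_ofReal (hf : AEMeasurable f μ) (hf0 : ∀ x, 0 ≤ f x) (g : α → ℝ) :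
    ∫ x, g x ∂μ.withDensity (fun x => ENNReal.ofReal (f x)) = ∫ x, f x * g x ∂μ := by
  rw [integral_withDensity_eq_integral_toReal_smul₀ hf.ennreal_ofReal (by simp)]
  simp only [ENNReal.toReal_ofReal (hf0 _), smul_eq_mul]

lemma integrable_withDensity_ofReal_iff (hf : AEMeasurable f μ) (hf0 : ∀ x, 0 ≤ f x)
    {g : α → ℝ} :
    Integrable g (μ.withDensity fun x => ENNReal.ofReal (f x)) ↔
      Integrable (fun x => f x * g x) μ := by
  rw [integrable_withDensity_iff_integrable_smul₀' hf.ennreal_ofReal (by simp)]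
  simp only [ENNReal.toReal_ofReal (hf0 _), smul_eq_mul]

lemma isProbabilityMeasure_withDensity_ofReal (hf : Integrable f μ) (hf0 : ∀ x, 0 ≤ f x)
    (h1 : ∫ x, f x ∂μ = 1) :
    IsProbabilityMeasure (μ.withDensity fun x => ENNReal.ofReal (f x)) := by
  constructor
  rw [withDensity_apply _ MeasurableSet.univ, Measure.restrict_univ,
    ← ofReal_integral_eq_lintegral_ofReal hf (ae_of_all _ hf0), h1, ENNReal.ofReal_one]

end WithDensityOfReal

section ExponentialFamily

variable {α ι E : Type*} [Fintype ι] [AddCommGroup E] [Module ℝ E]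
  {q : α → ℝ} {ψ : α → ι → ℝ} {θ : E →ₗ[ℝ] ι → ℝ} {Z : E → ℝ} {P : E → α → ℝ}

lemma mul_exp_mul_eq_of_expFamily (hP : ∀ V s, P V s = q s * exp (ψ s ⬝ᵥ θ V - Z V))
    (W W' : E) (t : ℝ) (s : α) :
    P W s * exp (t * (ψ s ⬝ᵥ (θ W' - θ W))) =
      exp (Z (W + t • (W' - W)) - Z W) * P (W + t • (W' - W)) s := by
  rw [hP, hP, mul_assoc, ← exp_add, mul_left_comm, ← exp_add, map_add, map_smul, map_sub,
    dotProduct_add, dotProduct_smul, smul_eq_mul]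
  ring_nf

lemma log_div_eq_of_expFamily (hq : ∀ s, 0 < q s)
    (hP : ∀ V s, P V s = q s * exp (ψ s ⬝ᵥ θ V - Z V)) (W W' : E) (s : α) :
    log (P W s / P W' s) = Z W' - Z W - ψ s ⬝ᵥ (θ W' - θ W) := by
  rw [hP, hP, mul_div_mul_left _ _ (hq s).ne', ← exp_sub, log_exp, dotProduct_sub]
  ring

structure IsExpFamily [MeasurableSpace α] (μ : Measure α) (q : α → ℝ) (ψ : α → ι → ℝ)
    (θ : E →ₗ[ℝ] ι → ℝ) (Z : E → ℝ) (P : E → α → ℝ) : Prop where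
  base_pos : ∀ s, 0 < q s
  apply_eq : ∀ V s, P V s = q s * exp (ψ s ⬝ᵥ θ V - Z V)
  integral_eq_one : ∀ V, ∫ s, P V s ∂μ = 1

namespace IsExpFamily

variable [MeasurableSpace α] {μ : Measure α}

lemma nonneg (h : IsExpFamily μ q ψ θ Z P) (V : E) (s : α) : 0 ≤ P V s := by
  rw [h.apply_eq]
  exact mul_nonneg (h.base_pos s).le (exp_pos _).le

lemma integrable (h : IsExpFamily μ q ψ θ Z P) (V : E) : Integrable (P V) μ :=
  Integrable.of_integral_ne_zero (by rw [h.integral_eq_one]; exact one_ne_zero)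

lemma integral_mul_exp_mul_withDensity (h : IsExpFamily μ q ψ θ Z P) (W W' : E) (t : ℝ)
    (g : α → ℝ) :
    ∫ s, g s * exp (t * (ψ s ⬝ᵥ (θ W' - θ W))) ∂μ.withDensity (fun s => ENNReal.ofReal (P W s)) =
      exp (Z (W + t • (W' - W)) - Z W) * ∫ s, g s * P (W + t • (W' - W)) s ∂μ := by
  rw [integral_withDensity_ofReal (h.integrable W).aemeasurable (h.nonneg W),
    ← integral_const_mul]
  congr 1 with s
  rw [mul_left_comm, mul_exp_mul_eq_of_expFamily h.apply_eq]
  ring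

lemma integrable_exp_mul_withDensity (h : IsExpFamily μ q ψ θ Z P) (W W' : E) (t : ℝ) :
    Integrable (fun s => exp (t * (ψ s ⬝ᵥ (θ W' - θ W))))
      (μ.withDensity fun s => ENNReal.ofReal (P W s)) := by
  rw [integrable_withDensity_ofReal_iff (h.integrable W).aemeasurable (h.nonneg W)]
  simp only [mul_exp_mul_eq_of_expFamily h.apply_eq]
  exact (h.integrable _).const_mul _

lemma mgf_withDensity (h : IsExpFamily μ q ψ θ Z P) (W W' : E) (t : ℝ) :
    mgf (fun s => ψ s ⬝ᵥ (θ W' - θ W)) (μ.withDensity fun s => ENNReal.ofReal (P W s)) t =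
      exp (Z (W + t • (W' - W)) - Z W) := by
  simpa [mgf, h.integral_eq_one] using h.integral_mul_exp_mul_withDensity W W' t 1

lemma iteratedDeriv_two_cgf_withDensity_le (h : IsExpFamily μ q ψ θ Z P) {κ : ℝ}
    (hcov : ∀ V (u : ι → ℝ),
      (∫ s, (u ⬝ᵥ ψ s) ^ 2 * P V s ∂μ) - (∫ s, (u ⬝ᵥ ψ s) * P V s ∂μ) ^ 2 ≤ κ * ∑ i, u i ^ 2)
    (W W' : E) (t : ℝ) :
    iteratedDeriv 2 (cgf (fun s => ψ s ⬝ᵥ (θ W' - θ W))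
      (μ.withDensity fun s => ENNReal.ofReal (P W s))) t ≤ κ * ∑ i, (θ W' - θ W) i ^ 2 := by
  set X : α → ℝ := fun s => ψ s ⬝ᵥ (θ W' - θ W)
  set ν := μ.withDensity fun s => ENNReal.ofReal (P W s)
  have hmem : t ∈ interior (integrableExpSet X ν) :=
    mem_interior_integrableExpSet_of_forall (h.integrable_exp_mul_withDensity W W') t
  have hmoment (g : α → ℝ) :
      (∫ s, g s * exp (t * X s) ∂ν) / mgf X ν t = ∫ s, g s * P (W + t • (W' - W)) s ∂μ := by
    rw [h.integral_mul_exp_mul_withDensity, h.mgf_withDensity,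
      mul_div_cancel_left₀ _ (exp_pos _).ne']
  rw [iteratedDeriv_two_cgf hmem, deriv_cgf hmem, hmoment, hmoment]
  simpa only [dotProduct_comm] using hcov (W + t • (W' - W)) (θ W' - θ W)

lemma integral_mul_log_div_le (h : IsExpFamily μ q ψ θ Z P) {κ : ℝ}
    (hcov : ∀ V (u : ι → ℝ),
      (∫ s, (u ⬝ᵥ ψ s) ^ 2 * P V s ∂μ) - (∫ s, (u ⬝ᵥ ψ s) * P V s ∂μ) ^ 2 ≤ κ * ∑ i, u i ^ 2)
    (W W' : E) :
    ∫ s, P W s * log (P W s / P W' s) ∂μ ≤ κ / 2 * ∑ i, (θ W' - θ W) i ^ 2 := by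
  set X : α → ℝ := fun s => ψ s ⬝ᵥ (θ W' - θ W)
  set ν := μ.withDensity fun s => ENNReal.ofReal (P W s)
  have := isProbabilityMeasure_withDensity_ofReal (h.integrable W) (h.nonneg W)
    (h.integral_eq_one W)
  have hX := h.integrable_exp_mul_withDensity W W'
  have hcgf : cgf X ν 1 = Z W' - Z W := by
    rw [cgf, h.mgf_withDensity W W' 1, log_exp, one_smul, add_sub_cancel]
  have hmean : ν[X] = ∫ s, P W s * X s ∂μ :=
    integral_withDensity_ofReal (h.integrable W).aemeasurable (h.nonneg W) X
  have hXint : Integrable (fun s => P W s * X s) μ :=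
    (integrable_withDensity_ofReal_iff (h.integrable W).aemeasurable (h.nonneg W)).1
      (integrable_of_mem_interior_integrableExpSet (mem_interior_integrableExpSet_of_forall hX 0))
  calc ∫ s, P W s * log (P W s / P W' s) ∂μ
      = ∫ s, (Z W' - Z W) * P W s - P W s * X s ∂μ := by
        congr 1 with s
        rw [log_div_eq_of_expFamily h.base_pos h.apply_eq]
        ring
    _ = cgf X ν 1 - 1 * ν[X] := by
        rw [integral_sub ((h.integrable W).const_mul _) hXint, integral_const_mul,
          h.integral_eq_one, hmean, hcgf]
        ring
    _ ≤ κ / 2 * ∑ i, (θ W' - θ W) i ^ 2 := by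
        linarith [cgf_le_mul_integral_add_of_iteratedDeriv_two_le hX
          (h.iteratedDeriv_two_cgf_withDensity_le hcov W W') one_pos]

end IsExpFamily

end ExponentialFamily

section VecQuadraticForm

lemma dotProduct_mul_transpose_mulVec {m n R : Type*} [Fintype m] [Fintype n] [CommSemiring R]
    (Φ : Matrix m n R) (x : m → R) : x ⬝ᵥ ((Φ * Φᵀ) *ᵥ x) = (Φᵀ *ᵥ x) ⬝ᵥ (Φᵀ *ᵥ x) := by
  rw [← mulVec_mulVec, dotProduct_mulVec, mulVec_transpose]

variable {a b : ℕ} {φv : Fin b → ℝ} {Φm : Matrix (Fin a × Fin b) (Fin a) ℝ}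

lemma transpose_mulVec_vec (hΦm : ∀ p k, Φm p k = if k = p.1 then φv p.2 else 0)
    (M : Matrix (Fin a) (Fin b) ℝ) : Φmᵀ *ᵥ _root_.vec M = M *ᵥ φv := by
  ext k
  simp [mulVec, dotProduct, hΦm, _root_.vec, Fintype.sum_prod_type, mul_comm]

lemma vec_dotProduct_mul_transpose_mulVec_vec
    (hΦm : ∀ p k, Φm p k = if k = p.1 then φv p.2 else 0) (M : Matrix (Fin a) (Fin b) ℝ) :
    _root_.vec M ⬝ᵥ ((Φm * Φmᵀ) *ᵥ _root_.vec M) = ∑ i, (M *ᵥ φv) i ^ 2 := by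
  rw [dotProduct_mul_transpose_mulVec, transpose_mulVec_vec hΦm]
  simp only [dotProduct, sq]

end VecQuadraticForm

theorem stmt_14_general {ds dψ dφ : ℕ}
    (q : (Fin ds → ℝ) → ℝ) (ψ : (Fin ds → ℝ) → (Fin dψ → ℝ)) (φv : Fin dφ → ℝ)
    (Z : Matrix (Fin dψ) (Fin dφ) ℝ → ℝ)
    (P : Matrix (Fin dψ) (Fin dφ) ℝ → (Fin ds → ℝ) → ℝ)
    (hq : ∀ s', 0 < q s')
    (hP : ∀ V s', P V s' = q s' * Real.exp (ψ s' ⬝ᵥ (V *ᵥ φv) - Z V))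
    (hprob : ∀ V, ∫ s', P V s' = 1)
    (κ : ℝ)
    (hcov : ∀ (V : Matrix (Fin dψ) (Fin dφ) ℝ) (u : Fin dψ → ℝ),
      (∫ s', (u ⬝ᵥ ψ s') ^ 2 * P V s') - (∫ s', (u ⬝ᵥ ψ s') * P V s') ^ 2 ≤
        κ * ∑ i, u i ^ 2)
    (Φm : Matrix (Fin dψ × Fin dφ) (Fin dψ) ℝ)
    (hΦm : ∀ (p : Fin dψ × Fin dφ) (k : Fin dψ), Φm p k = if k = p.1 then φv p.2 else 0)
    (W W' : Matrix (Fin dψ) (Fin dφ) ℝ) :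
    ∫ s', P W s' * Real.log (P W s' / P W' s') ≤
      (κ / 2) * ((_root_.vec W - _root_.vec W') ⬝ᵥ ((Φm * Φmᵀ) *ᵥ (_root_.vec W - _root_.vec W'))) := by
  set θ := (mulVecBilin ℝ ℝ).flip φv
  have hfamily : IsExpFamily volume q ψ θ Z P := ⟨hq, hP, hprob⟩
  calc ∫ s', P W s' * log (P W s' / P W' s')
      ≤ κ / 2 * ∑ i, (θ W' - θ W) i ^ 2 := hfamily.integral_mul_log_div_le hcov W W'
    _ = κ / 2 * ∑ i, ((W - W') *ᵥ φv) i ^ 2 := by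
        congr 1
        refine Finset.sum_congr rfl fun i _ => ?_
        simp only [θ, Pi.sub_apply, LinearMap.flip_apply, mulVecBilin_apply, sub_mulVec]
        ring
    _ = _ := by rw [← vec_dotProduct_mul_transpose_mulVec_vec hΦm]; rfl

/-- KL divergence quadratic bound for exponential family transitions: if the conditional
covariance of ψ(s') is bounded by κI for all parameters, then
D_KL(P_W ‖ P_{W'}) ≤ (κ/2) ‖vec W - vec W'‖²_{Φ Φᵀ}, where Φ is the matrix whose rows are
(E_{ij} φ)ᵀ over all basis matrices E_{ij}, i.e. Φ (i,j) k = δ_{ik} φ_j. -/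
theorem stmt_14 {ds dψ dφ : ℕ}
    (q : (Fin ds → ℝ) → ℝ) (ψ : (Fin ds → ℝ) → (Fin dψ → ℝ)) (φv : Fin dφ → ℝ)
    (Z : Matrix (Fin dψ) (Fin dφ) ℝ → ℝ)
    (P : Matrix (Fin dψ) (Fin dφ) ℝ → (Fin ds → ℝ) → ℝ)
    (hq : ∀ s', 0 < q s')
    (hZ : ∀ V, Z V = Real.log (∫ s', q s' * Real.exp (ψ s' ⬝ᵥ (V *ᵥ φv))))
    (hP : ∀ V s', P V s' = q s' * Real.exp (ψ s' ⬝ᵥ (V *ᵥ φv) - Z V))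
    (hprob : ∀ V, ∫ s', P V s' = 1)
    (κ : ℝ) (hκ : 0 ≤ κ)
    (hcov : ∀ (V : Matrix (Fin dψ) (Fin dφ) ℝ) (u : Fin dψ → ℝ),
      (∫ s', (u ⬝ᵥ ψ s') ^ 2 * P V s') - (∫ s', (u ⬝ᵥ ψ s') * P V s') ^ 2 ≤
        κ * ∑ i, u i ^ 2)
    (Φm : Matrix (Fin dψ × Fin dφ) (Fin dψ) ℝ)
    (hΦm : ∀ (p : Fin dψ × Fin dφ) (k : Fin dψ), Φm p k = if k = p.1 then φv p.2 else 0)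
    (W W' : Matrix (Fin dψ) (Fin dφ) ℝ)
    (hKLint : Integrable fun s' => P W s' * Real.log (P W s' / P W' s')) :
    ∫ s', P W s' * Real.log (P W s' / P W' s') ≤
      (κ / 2) * ((_root_.vec W - _root_.vec W') ⬝ᵥ ((Φm * Φmᵀ) *ᵥ (_root_.vec W - _root_.vec W'))) :=
  stmt_14_general q ψ φv Z P hq hP hprob κ hcov Φm hΦm W W'
end
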